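/- arXiv:1902.00503 — 2 statements merged into one kernel-verified Lean document; each statement's English description precedes it below -/
import Mathlib

section
/- The infinite word x_5 is balanced: for every symbol a ∈ {0,1,2,3,4} and every two factors u, v of x_5 of equal length, the numbers of occurrences of a in u and in v differ by at most 1. -/
/-- The characteristic Sturmian word with slope `α = √2 - 1`, indexed from 1:
`c_α[n] = ⌊α(n+1)⌋ - ⌊αn⌋`. -/
noncomputable def calpha (n : ℕ) : ℤ :=
  ⌊(Real.sqrt 2 - 1) * ((n : ℝ) + 1)⌋ - ⌊(Real.sqrt 2 - 1) * (n : ℝ)⌋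

/-- `zcount m` = number of indices `1 ≤ j ≤ m` with `c_α[j] = 0`. -/
noncomputable def zcount (m : ℕ) : ℕ :=
  ((Finset.Icc 1 m).filter fun j => calpha j = 0).card

/-- `ocount m` = number of indices `1 ≤ j ≤ m` with `c_α[j] = 1`. -/
noncomputable def ocount (m : ℕ) : ℕ :=
  ((Finset.Icc 1 m).filter fun j => calpha j = 1).card

/-- The infinite balanced word `x₅` over `{0,1,2,3,4}`, indexed from 0, obtained from
`c_α` by replacing the 0's by `(0102)^ω` and the 1's by `(34)^ω`. -/
noncomputable def x5 (i : ℕ) : ℕ :=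
  if calpha (i + 1) = 0 then [0, 1, 0, 2].getD ((zcount (i + 1) - 1) % 4) 0
  else [3, 4].getD ((ocount (i + 1) - 1) % 2) 0

/-- Number of occurrences of the symbol `a` in the length-`n` factor of `x₅`
starting at position `i`. -/
noncomputable def x5occ (a i n : ℕ) : ℕ :=
  ((Finset.range n).filter fun j => x5 (i + j) = a).card

/-!
Each letter `a` of `x₅` has a prefix-count function of the form `m ↦ ⌊d m + γ⌋`: the prefix of
length `m` contains `ocount m = ⌊α (m + 1)⌋` letters coming from 1's of `c_α` and
`zcount m = ⌊(1 - α)(m + 1)⌋` coming from 0's, and the periodic substitutions turn these into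
`(zcount m + 1) / 2`, `(zcount m + 2) / 4`, `zcount m / 4`, `(ocount m + 1) / 2`, `ocount m / 2`
occurrences of `0, …, 4`, again floors of affine functions of `m`. A word whose letter counts are
such floors is balanced, because `⌊x + t⌋ - ⌊x⌋ ∈ {⌊t⌋, ⌊t⌋ + 1}`.
-/

open Finset

lemma floor_add_sub_floor_mem_Icc (x t : ℝ) : ⌊x + t⌋ - ⌊x⌋ ∈ Icc ⌊t⌋ (⌊t⌋ + 1) := by
  have := Int.le_floor_add x t
  have := Int.le_floor_add_floor x t
  rw [mem_Icc]
  omega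

section FactorCount

variable {β : Type*} [DecidableEq β]

def factorCount (w : ℕ → β) (a : β) (i n : ℕ) : ℕ :=
  #{j ∈ range n | w (i + j) = a}

lemma factorCount_succ (w : ℕ → β) (a : β) (i n : ℕ) :
    factorCount w a i (n + 1) = factorCount w a i n + if w (i + n) = a then 1 else 0 := by
  simp only [factorCount, card_filter, sum_range_succ]

theorem natAbs_factorCount_sub_le_one {w : ℕ → β} {a : β} {d γ : ℝ}
    (h : ∀ m : ℕ, (if w m = a then 1 else 0 : ℤ) = ⌊d * ↑(m + 1) + γ⌋ - ⌊d * m + γ⌋)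
    (i i' n : ℕ) : ((factorCount w a i n : ℤ) - factorCount w a i' n).natAbs ≤ 1 := by
  have telescope : ∀ j, (factorCount w a j n : ℤ) =
      ⌊(d * j + γ) + d * n⌋ - ⌊d * j + γ⌋ := by
    intro j
    induction n with
    | zero => simp [factorCount]
    | succ n ih =>
      push_cast [factorCount_succ, ih, h (j + n)]
      ring_nf
  have hi := floor_add_sub_floor_mem_Icc (d * i + γ) (d * n)
  have hi' := floor_add_sub_floor_mem_Icc (d * i' + γ) (d * n)
  rw [mem_Icc] at hi hi'
  rw [telescope, telescope]
  omega

end FactorCount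

local notation "α" => (Real.sqrt 2 - 1)

lemma alpha_pos : 0 < α := by
  simpa using Real.lt_sqrt_of_sq_lt (by norm_num : (1 : ℝ) ^ 2 < 2)

lemma alpha_lt_one : α < 1 := by
  have : Real.sqrt 2 < 2 := (Real.sqrt_lt' (by norm_num)).2 (by norm_num)
  linarith

lemma calpha_succ (m : ℕ) : calpha (m + 1) = ⌊α * ↑(m + 1 + 1)⌋ - ⌊α * ↑(m + 1)⌋ := by
  simp only [calpha]
  push_cast
  ring_nf

lemma calpha_eq_zero_or_one (m : ℕ) : calpha (m + 1) = 0 ∨ calpha (m + 1) = 1 := by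
  have hle : ⌊α * ↑(m + 1)⌋ ≤ ⌊α * ↑(m + 1 + 1)⌋ :=
    Int.floor_le_floor (mul_le_mul_of_nonneg_left (by push_cast; linarith) alpha_pos.le)
  have hlt : ⌊α * ↑(m + 1 + 1)⌋ ≤ ⌊α * ↑(m + 1)⌋ + 1 := by
    rw [← Int.floor_add_one]
    exact Int.floor_le_floor (by push_cast; linarith [alpha_lt_one])
  rw [calpha_succ]
  omega

lemma zcount_succ (m : ℕ) :
    zcount (m + 1) = zcount m + if calpha (m + 1) = 0 then 1 else 0 := by
  simp only [zcount, card_filter]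
  exact sum_Icc_succ_top (by omega) _

lemma ocount_succ (m : ℕ) :
    ocount (m + 1) = ocount m + if calpha (m + 1) = 1 then 1 else 0 := by
  simp only [ocount, card_filter]
  exact sum_Icc_succ_top (by omega) _

lemma ocount_eq_floor (m : ℕ) : (ocount m : ℤ) = ⌊α * ↑(m + 1)⌋ := by
  induction m with
  | zero =>
    rw [Int.floor_eq_zero_iff.2 ⟨by simp [alpha_pos.le], by simpa using alpha_lt_one⟩]
    rfl
  | succ m ih =>
    have := calpha_succ m
    have := calpha_eq_zero_or_one m
    rw [ocount_succ, Nat.cast_add, ih]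
    split_ifs <;> simp only [Nat.cast_one, Nat.cast_zero] <;> omega

lemma zcount_add_ocount (m : ℕ) : zcount m + ocount m = m := by
  induction m with
  | zero => rfl
  | succ m ih =>
    have := calpha_eq_zero_or_one m
    rw [zcount_succ, ocount_succ]
    split_ifs <;> omega

lemma zcount_eq_floor (m : ℕ) : (zcount m : ℤ) = ⌊(1 - α) * ↑(m + 1)⌋ := by
  have hirr : α * ↑(m + 1) ∉ Set.range Int.cast := by
    rintro ⟨k, hk⟩
    exact ((irrational_sqrt_two.sub_intCast 1).mul_natCast m.succ_ne_zero).ne_int k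
      (by simpa using hk.symm)
  have hsum : (zcount m : ℤ) + ocount m = m := by exact_mod_cast zcount_add_ocount m
  rw [sub_mul, one_mul, sub_eq_add_neg, Int.floor_natCast_add, Int.floor_neg,
    (Int.ceil_eq_floor_add_one_iff_notMem _).2 hirr, ← ocount_eq_floor]
  push_cast
  omega

noncomputable def x5PrefixCount (a m : ℕ) : ℕ :=
  match a with
  | 0 => (zcount m + 1) / 2
  | 1 => (zcount m + 2) / 4
  | 2 => zcount m / 4
  | 3 => (ocount m + 1) / 2
  | 4 => ocount m / 2
  | _ => 0

lemma x5PrefixCount_succ {a : ℕ} (ha : a < 5) (m : ℕ) :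
    x5PrefixCount a (m + 1) = x5PrefixCount a m + if x5 m = a then 1 else 0 := by
  rcases calpha_eq_zero_or_one m with h | h
  · have hz : zcount (m + 1) = zcount m + 1 := by simp [zcount_succ, h]
    have ho : ocount (m + 1) = ocount m := by simp [ocount_succ, h]
    have hx : x5 m = [0, 1, 0, 2].getD (zcount m % 4) 0 := by simp [x5, h, hz]
    have : zcount m % 4 < 4 := Nat.mod_lt _ (by norm_num)
    interval_cases a <;> interval_cases hr : zcount m % 4 <;>
      simp [x5PrefixCount, hx, hz, ho] <;> omega
  · have hz : zcount (m + 1) = zcount m := by simp [zcount_succ, h]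
    have ho : ocount (m + 1) = ocount m + 1 := by simp [ocount_succ, h]
    have hx : x5 m = [3, 4].getD (ocount m % 2) 0 := by simp [x5, h, ho]
    have : ocount m % 2 < 2 := Nat.mod_lt _ (by norm_num)
    interval_cases a <;> interval_cases hr : ocount m % 2 <;>
      simp [x5PrefixCount, hx, hz, ho] <;> omega

lemma floor_mul_succ_add_div (θ : ℝ) (c k m : ℕ) :
    (⌊θ * ↑(m + 1)⌋ + c) / (k : ℤ) = ⌊θ / k * m + (θ + c) / k⌋ := by
  rw [← Int.floor_add_natCast, ← Int.floor_div_natCast]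
  congr 1
  push_cast
  ring

lemma x5PrefixCount_eq_floor {a : ℕ} (ha : a < 5) :
    ∃ d γ : ℝ, ∀ m : ℕ, (x5PrefixCount a m : ℤ) = ⌊d * m + γ⌋ := by
  interval_cases a
  · exact ⟨_, _, fun m => by
      simpa [x5PrefixCount, zcount_eq_floor] using floor_mul_succ_add_div (1 - α) 1 2 m⟩
  · exact ⟨_, _, fun m => by
      simpa [x5PrefixCount, zcount_eq_floor] using floor_mul_succ_add_div (1 - α) 2 4 m⟩
  · exact ⟨_, _, fun m => by
      simpa [x5PrefixCount, zcount_eq_floor] using floor_mul_succ_add_div (1 - α) 0 4 m⟩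
  · exact ⟨_, _, fun m => by
      simpa [x5PrefixCount, ocount_eq_floor] using floor_mul_succ_add_div α 1 2 m⟩
  · exact ⟨_, _, fun m => by
      simpa [x5PrefixCount, ocount_eq_floor] using floor_mul_succ_add_div α 0 2 m⟩

/-- `x₅` is balanced: for every symbol `a ∈ {0,1,2,3,4}` and every two factors of
equal length, the numbers of occurrences of `a` differ by at most `1`. -/
theorem x5_balanced :
    ∀ a : ℕ, a < 5 → ∀ i i' n : ℕ,
      ((x5occ a i n : ℤ) - (x5occ a i' n : ℤ)).natAbs ≤ 1 := by
  intro a ha i i' n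
  obtain ⟨d, γ, hfloor⟩ := x5PrefixCount_eq_floor ha
  have hstep : ∀ m : ℕ, (if x5 m = a then 1 else 0 : ℤ) = ⌊d * ↑(m + 1) + γ⌋ - ⌊d * m + γ⌋ := by
    intro m
    rw [← hfloor, ← hfloor, x5PrefixCount_succ ha]
    push_cast
    ring
  exact natAbs_factorCount_sub_le_one hstep i i' n
end

section
/- The critical exponent of x_3 equals 2 + √2/2, and it is not attained: the supremum, over all positions i, lengths n ≥ 1 and periods p ≥ 1 with x_3[i+j] = x_3[i+j+p] for all 0 ≤ j < n − p, of the real numbers n/p equals 2 + √2/2, while every such n/p is strictly less than 2 + √2/2. -/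
/-- The infinite balanced word `x₃` over `{0,1,2}`, indexed from 0, obtained from
`c_α` by replacing the 0's by `(01)^ω` and the 1's by `2^ω`. -/
noncomputable def x3 (i : ℕ) : ℕ :=
  if calpha (i + 1) = 0 then [0, 1].getD ((zcount (i + 1) - 1) % 2) 0
  else 2

/-- The set of exponents `n/p` of nonempty factors of `x₃` with period `p ≥ 1`. -/
noncomputable def x3Exponents : Set ℝ :=
  {r : ℝ | ∃ i n p : ℕ, 1 ≤ n ∧ 1 ≤ p ∧
    (∀ j, j + p < n → x3 (i + j) = x3 (i + j + p)) ∧ r = (n : ℝ) / (p : ℝ)}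

/-!
Write `B t = ⌊t√2⌋`. Then `c_α[n] = B (n+1) - B n - 1`, and `x₃[i]` is `2` when `B` jumps by `2`
at `i + 1` and the parity of `B (i+1) + 1` otherwise. So a factor of period `p` makes
`B (t + p) - B t` constant on a window of `t`'s, and that constant is an even number `2k`.

Upper bound: with `d = p√2 - 2k`, shifting `t` by `k` or by `p + k` rotates `(M - t√2) / d`
by `√2/2` or by `√2/2 - 1`, so among any `p + k` consecutive `t` there is one with
`B (t + p) - B t ≠ 2k`. Hence `n ≤ 2p + k - 2 < (2 + √2/2) p`.

Lower bound: for a solution of `m² = 2T² + 1`, the vectors `(m, 2T)` and `(T, m)` form a basis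
of `ℤ²`; in these coordinates no `M - t√2` with `T < t < m + 2T` lies in `(0, m√2 - 2T]`, i.e.
`B (t + m) = B t + 2T` there. This yields the factor at position `T` of length `2m + T - 2` and
period `m`, whose exponent tends to `2 + √2/2` along the Pell solutions.
-/

noncomputable def sqrtTwoFloor (t : ℕ) : ℤ := ⌊√2 * t⌋

lemma sqrt_two_mul_ne_intCast {t : ℕ} (ht : t ≠ 0) (M : ℤ) : √2 * t ≠ M :=
  (irrational_sqrt_two.mul_natCast ht).ne_int M

lemma abs_sqrtTwoFloor_add_sub_lt (t p : ℕ) :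
    |((sqrtTwoFloor (t + p) - sqrtTwoFloor t : ℤ) : ℝ) - √2 * p| < 1 := by
  have h₁ := Int.floor_le (√2 * (t + p : ℕ))
  have h₂ := Int.lt_floor_add_one (√2 * (t + p : ℕ))
  have h₃ := Int.floor_le (√2 * t)
  have h₄ := Int.lt_floor_add_one (√2 * t)
  simp only [sqrtTwoFloor, Int.cast_sub, Nat.cast_add] at *
  rw [abs_lt]
  constructor <;> linarith

lemma sqrtTwoFloor_succ (t : ℕ) :
    sqrtTwoFloor (t + 1) = sqrtTwoFloor t + 1 ∨ sqrtTwoFloor (t + 1) = sqrtTwoFloor t + 2 := by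
  have h := abs_lt.mp (abs_sqrtTwoFloor_add_sub_lt t 1)
  rw [Nat.cast_one, mul_one] at h
  have h₁ : (0 : ℝ) < (sqrtTwoFloor (t + 1) - sqrtTwoFloor t : ℤ) := by
    linarith [Real.one_lt_sqrt_two]
  have h₂ : ((sqrtTwoFloor (t + 1) - sqrtTwoFloor t : ℤ) : ℝ) < 3 := by
    linarith [Real.sqrt_two_lt_three_halves]
  norm_cast at h₁ h₂
  omega

lemma sqrtTwoFloor_add_two_le (t : ℕ) : sqrtTwoFloor (t + 2) ≤ sqrtTwoFloor t + 3 := by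
  have h := abs_lt.mp (abs_sqrtTwoFloor_add_sub_lt t 2)
  have h₁ : ((sqrtTwoFloor (t + 2) - sqrtTwoFloor t : ℤ) : ℝ) < 4 := by
    push_cast at h ⊢
    linarith [Real.sqrt_two_lt_three_halves]
  norm_cast at h₁
  omega

lemma sqrtTwoFloor_one : sqrtTwoFloor 1 = 1 := by
  rw [sqrtTwoFloor, Nat.cast_one, mul_one, Int.floor_eq_iff]
  constructor <;> push_cast <;> linarith [Real.one_lt_sqrt_two, Real.sqrt_two_lt_three_halves]

lemma calpha_eq (n : ℕ) : calpha n = sqrtTwoFloor (n + 1) - sqrtTwoFloor n - 1 := by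
  have h₁ : (√2 - 1) * ((n : ℝ) + 1) = √2 * (n + 1 : ℕ) - (n + 1 : ℤ) := by push_cast; ring
  have h₂ : (√2 - 1) * (n : ℝ) = √2 * n - (n : ℤ) := by push_cast; ring
  rw [calpha, h₁, h₂, Int.floor_sub_intCast, Int.floor_sub_intCast, sqrtTwoFloor, sqrtTwoFloor]
  ring

lemma zcount_eq (m : ℕ) : (zcount m : ℤ) = 2 * m + 1 - sqrtTwoFloor (m + 1) := by
  induction m with
  | zero => simp [zcount, sqrtTwoFloor_one]
  | succ m ih =>
    have hcard : zcount (m + 1) = zcount m + if calpha (m + 1) = 0 then 1 else 0 := by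
      simp only [zcount, Finset.card_filter, Finset.sum_Icc_succ_top (by omega : 1 ≤ m + 1)]
    have hc : calpha (m + 1) = sqrtTwoFloor (m + 2) - sqrtTwoFloor (m + 1) - 1 := calpha_eq (m + 1)
    have hs : sqrtTwoFloor (m + 2) = _ ∨ sqrtTwoFloor (m + 2) = _ := sqrtTwoFloor_succ (m + 1)
    rw [hcard, show m + 1 + 1 = m + 2 from rfl]
    split_ifs <;> push_cast <;> omega

lemma x3_eq (i : ℕ) :
    (x3 i : ℤ) = if sqrtTwoFloor (i + 2) = sqrtTwoFloor (i + 1) + 1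
      then (sqrtTwoFloor (i + 1) + 1) % 2 else 2 := by
  have hz : (zcount (i + 1) : ℤ) = 2 * i + 3 - sqrtTwoFloor (i + 2) := by
    rw [zcount_eq]; push_cast; ring
  have hB : sqrtTwoFloor (i + 2) < 2 * i + 3 := Int.floor_lt.mpr (by
    push_cast
    nlinarith [Real.sqrt_two_lt_three_halves, (i.cast_nonneg : (0 : ℝ) ≤ i)])
  have hgetD (n : ℕ) : [0, 1].getD (n % 2) 0 = n % 2 := by
    rcases Nat.mod_two_eq_zero_or_one n with h | h <;> simp [h]
  have hc : calpha (i + 1) = sqrtTwoFloor (i + 2) - sqrtTwoFloor (i + 1) - 1 := calpha_eq (i + 1)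
  have hs : sqrtTwoFloor (i + 2) = _ ∨ sqrtTwoFloor (i + 2) = _ := sqrtTwoFloor_succ (i + 1)
  rw [x3]
  split_ifs <;> simp only [hgetD, Nat.cast_ofNat] <;> omega

lemma x3_eq_x3_iff (a c : ℕ) :
    x3 a = x3 c ↔
      sqrtTwoFloor (a + 2) - sqrtTwoFloor (a + 1) = sqrtTwoFloor (c + 2) - sqrtTwoFloor (c + 1) ∧
      (sqrtTwoFloor (a + 2) = sqrtTwoFloor (a + 1) + 1 →
        sqrtTwoFloor (a + 1) ≡ sqrtTwoFloor (c + 1) [ZMOD 2]) := by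
  rw [← Nat.cast_inj (R := ℤ), x3_eq, x3_eq, Int.ModEq]
  have ha : sqrtTwoFloor (a + 2) = _ ∨ sqrtTwoFloor (a + 2) = _ := sqrtTwoFloor_succ (a + 1)
  have hc : sqrtTwoFloor (c + 2) = _ ∨ sqrtTwoFloor (c + 2) = _ := sqrtTwoFloor_succ (c + 1)
  split_ifs <;> omega

lemma exists_mem_Ico_of_add_mem {S : Set ℕ} {a b : ℕ} (ha : 1 ≤ a) (hab : a ≤ b) (haS : a ∈ S)
    (hS : ∀ t ∈ S, t + a ∈ S ∨ t + b ∈ S) {X : ℕ} (hX : 1 ≤ X) :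
    ∃ t ∈ S, t ∈ Set.Ico X (X + b) := by
  induction X, hX using Nat.le_induction with
  | base => exact ⟨a, haS, ha, by omega⟩
  | succ X _ ih =>
    obtain ⟨t, htS, htX, htb⟩ := ih
    rcases htX.eq_or_lt with rfl | htX
    · rcases hS X htS with h | h
      · exact ⟨X + a, h, by omega, by omega⟩
      · exact ⟨X + b, h, by omega, by omega⟩
    · exact ⟨t, htS, htX, by omega⟩

lemma floor_add_ne_floor_of_div_mem_Ioo {x d : ℝ} {M : ℤ} (h : (M - x) / d ∈ Set.Ioo 0 1) :
    ⌊x + d⌋ ≠ ⌊x⌋ := by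
  intro heq
  have h₁ := Int.floor_le x
  have h₂ := Int.lt_floor_add_one x
  have h₃ := Int.floor_le (x + d)
  have h₄ := Int.lt_floor_add_one (x + d)
  rw [heq] at h₃ h₄
  suffices (⌊x⌋ : ℝ) < M ∧ (M : ℝ) < ⌊x⌋ + 1 by
    obtain ⟨h₅, h₆⟩ := this
    norm_cast at h₅ h₆
    omega
  obtain ⟨h₀, h₁'⟩ := h
  rcases div_pos_iff.mp h₀ with ⟨hM, hd⟩ | ⟨hM, hd⟩
  · rw [div_lt_one hd] at h₁'
    constructor <;> linarith
  · rw [div_lt_one_of_neg hd] at h₁'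
    constructor <;> linarith

lemma exists_sqrtTwoFloor_add_sub_ne {p k : ℕ} (hp : p ≠ 0) (hk : 1 ≤ k) {X : ℕ} (hX : 1 ≤ X) :
    ∃ t ∈ Set.Ico X (X + (p + k)), sqrtTwoFloor (t + p) - sqrtTwoFloor t ≠ 2 * k := by
  set d := √2 * p - 2 * k
  have hd0 : d ≠ 0 := sub_ne_zero.mpr (by exact_mod_cast sqrt_two_mul_ne_intCast hp (2 * k))
  have hsq : √2 ^ 2 = 2 := Real.sq_sqrt zero_le_two
  have hk_step (t : ℕ) (M : ℤ) :
      (((M + p : ℤ) : ℝ) - √2 * (t + k : ℕ)) / d = (M - √2 * t) / d + √2 / 2 := by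
    field_simp
    push_cast
    linear_combination (-(p : ℝ)) * hsq
  have hpk_step (t : ℕ) (M : ℤ) :
      (((M + p + 2 * k : ℤ) : ℝ) - √2 * (t + (p + k) : ℕ)) / d =
        (M - √2 * t) / d + √2 / 2 - 1 := by
    field_simp
    push_cast
    linear_combination (-(p : ℝ)) * hsq
  have hθ : 0 < √2 / 2 ∧ √2 / 2 < 1 := by
    constructor <;> linarith [Real.one_lt_sqrt_two, Real.sqrt_two_lt_three_halves]
  -- `t ∈ S` iff some integer lies strictly between `t√2` and `t√2 + d`.
  let S := {t : ℕ | ∃ M : ℤ, (M - √2 * t) / d ∈ Set.Ioo 0 1}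
  have hkS : k ∈ S := ⟨p, by
    have := hk_step 0 0
    simp only [zero_add, Int.cast_zero, CharP.cast_eq_zero, mul_zero, sub_zero, zero_div] at this
    rw [this]
    exact hθ⟩
  have hjump : ∀ t ∈ S, t + k ∈ S ∨ t + (p + k) ∈ S := by
    rintro t ⟨M, h₀, h₁⟩
    rcases lt_trichotomy ((M - √2 * t) / d + √2 / 2) 1 with h | h | h
    · exact Or.inl ⟨M + p, by rw [hk_step]; constructor <;> linarith⟩
    · refine absurd ?_ (sqrt_two_mul_ne_intCast (t := t + (p + k)) (by omega) (M + p + 2 * k))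
      have := hpk_step t M
      rw [h, sub_self, div_eq_zero_iff, sub_eq_zero] at this
      exact (this.resolve_right hd0).symm
    · exact Or.inr ⟨M + p + 2 * k, by rw [hpk_step]; constructor <;> linarith⟩
  obtain ⟨t, ⟨M, hM⟩, ht⟩ := exists_mem_Ico_of_add_mem hk (by omega) hkS hjump hX
  refine ⟨t, ht, fun h => floor_add_ne_floor_of_div_mem_Ioo hM ?_⟩
  have : √2 * (t + p : ℕ) = (√2 * t + d) + (2 * k : ℤ) := by push_cast; ring
  rw [sqrtTwoFloor, sqrtTwoFloor, this, Int.floor_add_intCast] at h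
  linarith

section PeriodicFactor

variable {i p w : ℕ}

lemma sqrtTwoFloor_shift_eq_of_periodic (hper : ∀ j < w, x3 (i + j) = x3 (i + j + p)) {j : ℕ}
    (hj : j ≤ w) :
    sqrtTwoFloor (i + 1 + j + p) - sqrtTwoFloor (i + 1 + j) =
      sqrtTwoFloor (i + 1 + p) - sqrtTwoFloor (i + 1) := by
  induction j with
  | zero => rfl
  | succ j ih =>
    have hstep := ((x3_eq_x3_iff _ _).mp (hper j (by omega))).1
    have := ih (by omega)
    ring_nf at hstep this ⊢
    omega

lemma even_sqrtTwoFloor_shift_of_periodic (hper : ∀ j < w, x3 (i + j) = x3 (i + j + p))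
    (hw : 2 ≤ w) : Even (sqrtTwoFloor (i + 1 + p) - sqrtTwoFloor (i + 1)) := by
  have h₀ := (x3_eq_x3_iff _ _).mp (hper 0 (by omega))
  have h₁ := (x3_eq_x3_iff _ _).mp (hper 1 (by omega))
  have hshift := sqrtTwoFloor_shift_eq_of_periodic hper (j := 1) (by omega)
  have hno22 := sqrtTwoFloor_add_two_le (i + 1)
  have hs₁ := sqrtTwoFloor_succ (i + 1)
  have hs₂ := sqrtTwoFloor_succ (i + 2)
  simp only [Int.ModEq] at h₀ h₁
  rw [Int.even_iff]
  ring_nf at *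
  omega

lemma exists_add_two_le_of_periodic (hp : p ≠ 0) (hper : ∀ j < w, x3 (i + j) = x3 (i + j + p))
    (hw : 2 ≤ w) : ∃ k : ℕ, (2 * k : ℝ) < √2 * p + 1 ∧ w + 2 ≤ p + k := by
  set K := sqrtTwoFloor (i + 1 + p) - sqrtTwoFloor (i + 1) with hKdef
  obtain ⟨r, hr⟩ := even_sqrtTwoFloor_shift_of_periodic hper hw
  have hK := abs_lt.mp (abs_sqrtTwoFloor_add_sub_lt (i + 1) p)
  have hp' : (1 : ℝ) ≤ p := by exact_mod_cast Nat.one_le_iff_ne_zero.mpr hp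
  have hKpos : 0 < K := by
    have : (0 : ℝ) < K := by nlinarith [Real.one_lt_sqrt_two]
    exact_mod_cast this
  obtain ⟨k, hk⟩ : ∃ k : ℕ, K = 2 * k := ⟨r.toNat, by omega⟩
  refine ⟨k, by rw [← hKdef, hk] at hK; push_cast at hK; linarith, ?_⟩
  by_contra! hlt
  obtain ⟨t, ⟨ht₁, ht₂⟩, hne⟩ :=
    exists_sqrtTwoFloor_add_sub_ne hp (k := k) (by omega) (X := i + 1) (by omega)
  obtain ⟨j, rfl⟩ : ∃ j, t = i + 1 + j := ⟨t - (i + 1), by omega⟩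
  exact hne ((sqrtTwoFloor_shift_eq_of_periodic hper (by omega)).trans hk)

end PeriodicFactor

lemma x3_exponent_lt {i n p : ℕ} (hp : 1 ≤ p)
    (hper : ∀ j, j + p < n → x3 (i + j) = x3 (i + j + p)) : (n : ℝ) / p < 2 + √2 / 2 := by
  have hp' : (1 : ℝ) ≤ p := by exact_mod_cast hp
  rw [div_lt_iff₀ (by positivity)]
  rcases le_or_gt n (p + 1) with hn | hn
  · have : (n : ℝ) ≤ p + 1 := by exact_mod_cast hn
    nlinarith [Real.one_lt_sqrt_two]
  · obtain ⟨w, rfl⟩ : ∃ w, n = p + w := ⟨n - p, by omega⟩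
    obtain ⟨k, hk, hw⟩ := exists_add_two_le_of_periodic (i := i) (by omega)
      (fun j hj => hper j (by omega)) (by omega : 2 ≤ w)
    have : ((w + 2 : ℕ) : ℝ) ≤ (p + k : ℕ) := by exact_mod_cast hw
    push_cast at this ⊢
    linarith

lemma exists_pell_le (N : ℕ) : ∃ m T : ℕ, m ^ 2 = 2 * T ^ 2 + 1 ∧ 1 ≤ T ∧ N ≤ m := by
  induction N with
  | zero => exact ⟨3, 2, rfl, by norm_num, by norm_num⟩
  | succ N ih =>
    obtain ⟨m, T, hmT, hT, hN⟩ := ih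
    exact ⟨3 * m + 4 * T, 2 * m + 3 * T, by ring_nf; rw [hmT]; ring, by omega, by omega⟩

section Pell

variable {m T : ℕ}

lemma pos_of_pell (hmT : m ^ 2 = 2 * T ^ 2 + 1) : 0 < m :=
  Nat.pos_of_ne_zero (by rintro rfl; simp at hmT)

lemma two_mul_lt_sqrt_two_mul (hmT : m ^ 2 = 2 * T ^ 2 + 1) : (2 * T : ℝ) < √2 * m := by
  have h : ((m ^ 2 : ℕ) : ℝ) = (2 * T ^ 2 + 1 : ℕ) := congrArg _ hmT
  refine lt_of_pow_lt_pow_left₀ 2 (by positivity) ?_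
  rw [mul_pow, mul_pow, Real.sq_sqrt zero_le_two]
  push_cast at h
  linarith

lemma sqrt_two_mul_lt_two_mul_add_one (hmT : m ^ 2 = 2 * T ^ 2 + 1) (hT : 1 ≤ T) :
    √2 * m < 2 * T + 1 := by
  have h : ((m ^ 2 : ℕ) : ℝ) = (2 * T ^ 2 + 1 : ℕ) := congrArg _ hmT
  have hT' : (1 : ℝ) ≤ T := by exact_mod_cast hT
  refine lt_of_pow_lt_pow_left₀ 2 (by positivity) ?_
  rw [mul_pow, Real.sq_sqrt zero_le_two]
  push_cast at h
  nlinarith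

lemma sub_notMem_Ioc_of_pell (hmT : m ^ 2 = 2 * T ^ 2 + 1) {t : ℕ} (ht₁ : T < t)
    (ht₂ : t < m + 2 * T) (M : ℤ) : M - √2 * t ∉ Set.Ioc 0 (√2 * m - 2 * T) := by
  rintro ⟨h₀, h₁⟩
  have hsq : √2 ^ 2 = 2 := Real.sq_sqrt zero_le_two
  have hmTℤ : (m : ℤ) ^ 2 = 2 * T ^ 2 + 1 := by exact_mod_cast hmT
  -- `(a, b)` are the coordinates of `(t, M)` in the basis `(m, 2T)`, `(T, m)` of `ℤ²`.
  obtain ⟨a, ha⟩ : ∃ a : ℤ, a = m * t - T * M := ⟨_, rfl⟩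
  obtain ⟨b, hb⟩ : ∃ b : ℤ, b = m * M - 2 * T * t := ⟨_, rfl⟩
  have ht : (t : ℤ) = a * m + b * T := by rw [ha, hb]; linear_combination (-(t : ℤ)) * hmTℤ
  have hba : (b : ℝ) - √2 * a = (m + √2 * T) * (M - √2 * t) := by
    rw [ha, hb]
    push_cast
    linear_combination (T : ℝ) * t * hsq
  have hunit : (m + √2 * T) * (√2 * m - 2 * T) = √2 := by
    have h : ((m ^ 2 : ℕ) : ℝ) = (2 * T ^ 2 + 1 : ℕ) := congrArg _ hmT
    push_cast at h
    linear_combination √2 * h + (m : ℝ) * T * hsq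
  have hm : (1 : ℝ) ≤ m := by exact_mod_cast pos_of_pell hmT
  have hpos : (0 : ℝ) < m + √2 * T := by positivity
  have hlo : √2 * a < b := by nlinarith [mul_pos hpos h₀]
  have hhi : b ≤ √2 * (a + 1) := by nlinarith [mul_le_mul_of_nonneg_left h₁ hpos.le]
  have hs₁ := Real.one_lt_sqrt_two
  have hs₂ := Real.sqrt_two_lt_three_halves
  have key : (a ≤ -1 ∧ b ≤ 0) ∨ (a = 0 ∧ b = 1) ∨ (a = 1 ∧ b = 2) ∨ (2 ≤ a ∧ 3 ≤ b) := by
    rcases (by omega : a ≤ -1 ∨ a = 0 ∨ a = 1 ∨ 2 ≤ a) with ha | rfl | rfl | ha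
    · have : (a : ℝ) ≤ -1 := by exact_mod_cast ha
      have : (b : ℝ) < 1 := by nlinarith
      have : b < 1 := by exact_mod_cast this
      omega
    · have h₁ : (0 : ℝ) < b := by simpa using hlo
      have h₂ : (b : ℝ) < 2 := by push_cast at hhi; linarith
      norm_cast at h₁ h₂
      omega
    · have h₁ : (1 : ℝ) < b := by push_cast at hlo; linarith
      have h₂ : (b : ℝ) < 3 := by push_cast at hhi; linarith
      norm_cast at h₁ h₂
      omega
    · have : (2 : ℝ) ≤ a := by exact_mod_cast ha
      have : (2 : ℝ) < b := by nlinarith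
      have : 2 < b := by exact_mod_cast this
      omega
  rcases key with ⟨ha, hb⟩ | ⟨rfl, rfl⟩ | ⟨rfl, rfl⟩ | ⟨ha, hb⟩
  · nlinarith
  · omega
  · omega
  · nlinarith

lemma sqrtTwoFloor_add_of_pell (hmT : m ^ 2 = 2 * T ^ 2 + 1) {t : ℕ} (ht₁ : T < t)
    (ht₂ : t < m + 2 * T) : sqrtTwoFloor (t + m) = sqrtTwoFloor t + 2 * T := by
  have hd := two_mul_lt_sqrt_two_mul hmT
  have h : √2 * (t + m : ℕ) = √2 * t + (√2 * m - 2 * T) + (2 * T : ℤ) := by push_cast; ring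
  rw [sqrtTwoFloor, sqrtTwoFloor, h, Int.floor_add_intCast, add_left_inj, Int.floor_eq_iff]
  refine ⟨by linarith [Int.floor_le (√2 * t)], not_le.mp fun hle => ?_⟩
  refine sub_notMem_Ioc_of_pell hmT ht₁ ht₂ (⌊√2 * t⌋ + 1) ⟨?_, ?_⟩
  · push_cast
    linarith [Int.lt_floor_add_one (√2 * t)]
  · push_cast at hle ⊢
    linarith

lemma x3_periodic_of_pell (hmT : m ^ 2 = 2 * T ^ 2 + 1) {j : ℕ} (hj : j + m < 2 * m + T - 2) :
    x3 (T + j) = x3 (T + j + m) := by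
  have h₁ := sqrtTwoFloor_add_of_pell hmT (t := T + j + 1) (by omega) (by omega)
  have h₂ := sqrtTwoFloor_add_of_pell hmT (t := T + j + 2) (by omega) (by omega)
  rw [x3_eq_x3_iff, Int.ModEq]
  ring_nf at h₁ h₂ ⊢
  omega

lemma pell_exponent_mem (hmT : m ^ 2 = 2 * T ^ 2 + 1) (hT : 1 ≤ T) :
    ((2 * m + T - 2 : ℕ) : ℝ) / m ∈ x3Exponents := by
  have hm := pos_of_pell hmT
  exact ⟨T, 2 * m + T - 2, m, by omega, hm, fun j hj => x3_periodic_of_pell hmT hj, rfl⟩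

lemma lt_pell_exponent (hmT : m ^ 2 = 2 * T ^ 2 + 1) (hT : 1 ≤ T) :
    (2 + √2 / 2) * m - 5 / 2 < ((2 * m + T - 2 : ℕ) : ℝ) := by
  rw [Nat.cast_sub (by have := pos_of_pell hmT; omega)]
  push_cast
  linarith [sqrt_two_mul_lt_two_mul_add_one hmT hT]

end Pell

/-- The critical exponent of `x₃` equals `2 + √2/2`, and it is not attained: the set of
exponents of factors of `x₃` has least upper bound `2 + √2/2`, and every exponent is
strictly below it. -/
theorem x3_critical_exponent :
    IsLUB x3Exponents (2 + Real.sqrt 2 / 2) ∧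
    ∀ r ∈ x3Exponents, r < 2 + Real.sqrt 2 / 2 := by
  have upper : ∀ r ∈ x3Exponents, r < 2 + √2 / 2 := by
    rintro r ⟨i, n, p, -, hp, hper, rfl⟩
    exact x3_exponent_lt hp hper
  refine ⟨⟨fun r hr => (upper r hr).le, fun b hb => ?_⟩, upper⟩
  by_contra! hb_lt
  obtain ⟨N, hN⟩ := exists_nat_gt (5 / (2 * (2 + √2 / 2 - b)))
  obtain ⟨m, T, hmT, hT, hNm⟩ := exists_pell_le N
  have hm : (0 : ℝ) < m := by exact_mod_cast pos_of_pell hmT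
  have hlarge : 5 / 2 < (2 + √2 / 2 - b) * m := by
    have hgap : 0 < 2 + √2 / 2 - b := by linarith
    rw [div_lt_iff₀ (by positivity)] at hN
    nlinarith [(Nat.cast_le (α := ℝ)).mpr hNm]
  have hexp := (div_le_iff₀ hm).mp (hb (pell_exponent_mem hmT hT))
  linarith [lt_pell_exponent hmT hT]
end
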